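/- (Quadratic case) Assume in addition that t_j = s_j + 2 for every 1 ≤ j ≤ m. Then for all integers p, q with 0 ≤ q ≤ p ≤ n: there exists an index i with 0 ≤ i ≤ l_p and a_i^{(p)} = q if and only if every integer r with q ≤ r ≤ p − 2 belongs to S; and when this is the case, the (unique) such index is i = p − q. In particular, in the quadratic case a_i^{(p)} = p − i for every 0 ≤ i ≤ l_p. -/

import Mathlib

/-!
In the quadratic case `d(x) = max {s ∈ S : s ≤ x - 2}`. Hence `d(x) = x - 2` when `x - 2 ∈ S`,
and `d(x) = d(x - 1)` exactly when `x - 2 ∉ S`. So while `p - 2, …, p - i` lie in `S` the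
sequence runs `a_j = p - j`, and the stopping test `d(a_{j-1}) = d(a_j)` first succeeds at the
first `j ≥ 1` with `p - j - 1 ∉ S` (there is one, `S` being finite). Thus
`i ≤ l_p ↔ [p - i, p - 2] ⊆ S`, and both claims follow.
-/

/-- `d(p) = max { s j : t j ≤ p }`, with `⊥` meaning "undefined" (i.e. `-∞`). -/
noncomputable def dvalue (m : ℕ) (s t : ℕ → ℤ) (p : ℤ) : WithBot ℤ :=
  ((Finset.range m).filter (fun j => t j ≤ p)).sup (fun j => (s j : WithBot ℤ))

/-- `d†(p) = min { t j : s j ≥ p }`, with `⊤` meaning "undefined" (i.e. `+∞`). -/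
noncomputable def ddual (m : ℕ) (s t : ℕ → ℤ) (p : ℤ) : WithTop ℤ :=
  ((Finset.range m).filter (fun j => p ≤ s j)).inf (fun j => (t j : WithTop ℤ))

/-- The extension of `d` to `WithBot ℤ`, sending `⊥` to `⊥`. -/
noncomputable def dW (m : ℕ) (s t : ℕ → ℤ) : WithBot ℤ → WithBot ℤ :=
  WithBot.recBotCoe ⊥ (dvalue m s t)

/-- The extension of `d†` to `WithTop ℤ`, sending `⊤` to `⊤`. -/
noncomputable def dtW (m : ℕ) (s t : ℕ → ℤ) : WithTop ℤ → WithTop ℤ :=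
  WithTop.recTopCoe ⊤ (ddual m s t)

/-- The (total extension of the) sequence `a_i^{(p)}`:
`a_0 = p`, `a_1 = p - 1`, `a_{i+2} = d(a_i)`.  For `i ≤ l_p` this agrees with the
sequence of the paper. -/
noncomputable def aSeq (m : ℕ) (s t : ℕ → ℤ) (p : ℤ) : ℕ → WithBot ℤ
  | 0 => (p : WithBot ℤ)
  | 1 => ((p - 1 : ℤ) : WithBot ℤ)
  | i + 2 => dW m s t (aSeq m s t p i)

/-- The length `l_p`: `l_0 = 0`, and for `p ≠ 0` it is the least `j ≥ 1` with
`d(a_{j-1}^{(p)}) = d(a_j^{(p)})` (undefined values compared as `⊥`). -/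
noncomputable def lSeq (m : ℕ) (s t : ℕ → ℤ) (p : ℤ) : ℕ :=
  if p = 0 then 0
  else sInf {j : ℕ | 1 ≤ j ∧ dW m s t (aSeq m s t p (j - 1)) = dW m s t (aSeq m s t p j)}

/-- The (total extension of the) dual sequence `a_i^{(p)†}`:
`a_0 = p`, `a_1 = p + 1`, `a_{i+2} = d†(a_i)`. -/
noncomputable def aSeqD (m : ℕ) (s t : ℕ → ℤ) (p : ℤ) : ℕ → WithTop ℤ
  | 0 => (p : WithTop ℤ)
  | 1 => ((p + 1 : ℤ) : WithTop ℤ)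
  | i + 2 => dtW m s t (aSeqD m s t p i)

/-- The dual length `l_p†`: `l_n† = 0`, and for `p ≠ n` it is the least `j ≥ 1` with
`d†(a_{j-1}^{(p)†}) = d†(a_j^{(p)†})` (undefined values compared as `⊤`). -/
noncomputable def lSeqD (n : ℤ) (m : ℕ) (s t : ℕ → ℤ) (p : ℤ) : ℕ :=
  if p = n then 0
  else sInf {j : ℕ | 1 ≤ j ∧ dtW m s t (aSeqD m s t p (j - 1)) = dtW m s t (aSeqD m s t p j)}

section Quadratic

variable {m : ℕ} {s t : ℕ → ℤ}

theorem dW_coe (x : ℤ) : dW m s t x = dvalue m s t x := rfl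

theorem dvalue_le_sub_two (hquad : ∀ j < m, t j = s j + 2) (x : ℤ) :
    dvalue m s t x ≤ ↑(x - 2) :=
  Finset.sup_le fun j hj => by
    simp only [Finset.mem_filter, Finset.mem_range] at hj
    have := hquad j hj.1
    exact WithBot.coe_le_coe.mpr (by omega)

theorem dvalue_eq_sub_two (hquad : ∀ j < m, t j = s j + 2) {x : ℤ}
    (hx : x - 2 ∈ s '' Set.Iio m) : dvalue m s t x = ↑(x - 2) := by
  obtain ⟨j, hj, hsj⟩ := hx
  refine le_antisymm (dvalue_le_sub_two hquad x) ?_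
  have hmem : j ∈ (Finset.range m).filter (fun j => t j ≤ x) := by
    simp only [Finset.mem_filter, Finset.mem_range]
    exact ⟨hj, by rw [hquad j hj]; omega⟩
  rw [← hsj]
  exact Finset.le_sup (f := fun j => (s j : WithBot ℤ)) hmem

theorem dvalue_eq_dvalue_sub_one_iff (hquad : ∀ j < m, t j = s j + 2) (x : ℤ) :
    dvalue m s t x = dvalue m s t (x - 1) ↔ x - 2 ∉ s '' Set.Iio m := by
  constructor
  · intro heq hx
    have hle := dvalue_le_sub_two hquad (x - 1)
    rw [← heq, dvalue_eq_sub_two hquad hx, WithBot.coe_le_coe] at hle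
    omega
  · intro hx
    unfold dvalue
    congr 1
    ext j
    simp only [Finset.mem_filter, Finset.mem_range, and_congr_right_iff]
    intro hj
    have hsj : s j ≠ x - 2 := fun h => hx ⟨j, hj, h⟩
    have := hquad j hj
    omega

theorem aSeq_eq_sub (hquad : ∀ j < m, t j = s j + 2) (p : ℤ) :
    ∀ {i : ℕ}, Set.Icc (p - i) (p - 2) ⊆ s '' Set.Iio m → aSeq m s t p i = ↑(p - i)
  | 0, _ => by simp [aSeq]
  | 1, _ => by simp [aSeq]
  | i + 2, h => by
    have hi : aSeq m s t p i = ↑(p - i) :=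
      aSeq_eq_sub hquad p (subset_trans (Set.Icc_subset_Icc (by omega) le_rfl) h)
    have hmem : p - i - 2 ∈ s '' Set.Iio m := h ⟨by push_cast; omega, by omega⟩
    rw [aSeq, hi, dW_coe, dvalue_eq_sub_two hquad hmem]
    congr 1
    push_cast
    ring

theorem forall_lt_dW_aSeq_ne_iff (hquad : ∀ j < m, t j = s j + 2) (p : ℤ) : ∀ i : ℕ,
    (∀ j < i, 1 ≤ j → dW m s t (aSeq m s t p (j - 1)) ≠ dW m s t (aSeq m s t p j)) ↔
      Set.Icc (p - i) (p - 2) ⊆ s '' Set.Iio m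
  | 0 => iff_of_true (fun _ hj => absurd hj (by omega)) fun _ ⟨_, _⟩ => by omega
  | 1 => iff_of_true (fun _ hj _ => absurd hj (by omega)) fun _ ⟨_, _⟩ => by omega
  | k + 2 => by
    have hIcc : Set.Icc (p - (k + 2 : ℕ)) (p - 2) =
        insert (p - k - 2) (Set.Icc (p - (k + 1 : ℕ)) (p - 2)) := by
      rw [show p - k - 2 = p - (k + 1 : ℕ) - 1 by push_cast; ring,
        Set.insert_Icc_left_eq_Icc_sub_one (by omega)]
      congr 1
      push_cast
      ring
    rw [Nat.forall_lt_succ_right, forall_lt_dW_aSeq_ne_iff hquad p (k + 1), hIcc,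
      Set.insert_subset_iff]
    refine and_comm.trans (and_congr_left fun h => ?_)
    rw [Nat.add_sub_cancel, imp_iff_right (by omega),
      aSeq_eq_sub hquad p (i := k) (subset_trans (Set.Icc_subset_Icc (by omega) le_rfl) h),
      aSeq_eq_sub hquad p h, dW_coe, dW_coe, Nat.cast_succ, ← sub_sub, Ne,
      dvalue_eq_dvalue_sub_one_iff hquad, not_not]

theorem le_lSeq_iff (hquad : ∀ j < m, t j = s j + 2) {p : ℤ} (hp : p ≠ 0) (i : ℕ) :
    i ≤ lSeq m s t p ↔ Set.Icc (p - i) (p - 2) ⊆ s '' Set.Iio m := by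
  set U := {j : ℕ | 1 ≤ j ∧ dW m s t (aSeq m s t p (j - 1)) = dW m s t (aSeq m s t p j)}
  have hU : U.Nonempty := by
    obtain ⟨r, hr, hrS⟩ :=
      (Set.Iio_infinite (p - 1)).exists_notMem_finite ((Set.finite_Iio m).image s)
    rw [Set.mem_Iio] at hr
    by_contra hempty
    have hsub := (forall_lt_dW_aSeq_ne_iff hquad p (p - r).toNat).mp
      fun j _ h1 heq => hempty ⟨j, h1, heq⟩
    exact hrS (hsub ⟨by omega, by omega⟩)
  rw [lSeq, if_neg hp, le_csInf_iff'' hU, ← forall_lt_dW_aSeq_ne_iff hquad p i]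
  constructor
  · intro h j hj h1 heq
    exact absurd (h j ⟨h1, heq⟩) (by omega)
  · rintro h j ⟨h1, heq⟩
    by_contra hlt
    exact h j (by omega) h1 heq

theorem aSeq_eq_sub_of_le_lSeq (hquad : ∀ j < m, t j = s j + 2) {p : ℤ} {i : ℕ}
    (hi : i ≤ lSeq m s t p) : aSeq m s t p i = ↑(p - i) := by
  by_cases hp : p = 0
  · rw [lSeq, if_pos hp, Nat.le_zero] at hi
    simp [hi, aSeq]
  · exact aSeq_eq_sub hquad p ((le_lSeq_iff hquad hp i).mp hi)

end Quadratic

theorem quadratic_case_general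
    (n : ℤ) (m : ℕ) (s t : ℕ → ℤ)
    (hquad : ∀ j : ℕ, j < m → t j = s j + 2) :
    (∀ p q : ℤ, 0 ≤ q → q ≤ p → p ≤ n →
      ((∃ i : ℕ, i ≤ lSeq m s t p ∧ aSeq m s t p i = (q : WithBot ℤ)) ↔
        ∀ r : ℤ, q ≤ r → r ≤ p - 2 → ∃ j : ℕ, j < m ∧ s j = r) ∧
      (∀ i : ℕ, i ≤ lSeq m s t p → aSeq m s t p i = (q : WithBot ℤ) → (i : ℤ) = p - q)) ∧
    (∀ p : ℤ, 0 ≤ p → p ≤ n → ∀ i : ℕ, i ≤ lSeq m s t p →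
      aSeq m s t p i = ((p - (i : ℤ) : ℤ) : WithBot ℤ)) := by
  have index_eq (p q : ℤ) (i : ℕ) (hi : i ≤ lSeq m s t p) (h : aSeq m s t p i = q) :
      (i : ℤ) = p - q := by
    rw [aSeq_eq_sub_of_le_lSeq hquad hi, WithBot.coe_inj] at h
    omega
  refine ⟨fun p q hq hqp _ => ⟨⟨?_, ?_⟩, index_eq p q⟩,
    fun p _ _ i hi => aSeq_eq_sub_of_le_lSeq hquad hi⟩
  · rintro ⟨i, hi, hai⟩ r hqr hrp
    have hiq := index_eq p q i hi hai
    rcases eq_or_ne p 0 with rfl | hp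
    · omega
    · exact (le_lSeq_iff hquad hp i).mp hi ⟨by omega, hrp⟩
  · intro h
    have hi : (p - q).toNat ≤ lSeq m s t p := by
      rcases eq_or_ne p 0 with rfl | hp
      · rw [lSeq, if_pos rfl]; omega
      · exact (le_lSeq_iff hquad hp _).mpr fun r ⟨hr1, hr2⟩ => h r (by omega) hr2
    refine ⟨_, hi, ?_⟩
    rw [aSeq_eq_sub_of_le_lSeq hquad hi]
    congr 1
    omega

theorem quadratic_case
    (n : ℤ) (m : ℕ) (s t : ℕ → ℤ)
    (hn : 0 ≤ n)
    (hsmono : ∀ i j : ℕ, i < j → j < m → s i < s j)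
    (htmono : ∀ i j : ℕ, i < j → j < m → t i < t j)
    (hs0 : ∀ j : ℕ, j < m → 0 ≤ s j)
    (htn : ∀ j : ℕ, j < m → t j ≤ n)
    (hlen : ∀ j : ℕ, j < m → s j + 2 ≤ t j)
    (hquad : ∀ j : ℕ, j < m → t j = s j + 2) :
    (∀ p q : ℤ, 0 ≤ q → q ≤ p → p ≤ n →
      ((∃ i : ℕ, i ≤ lSeq m s t p ∧ aSeq m s t p i = (q : WithBot ℤ)) ↔
        ∀ r : ℤ, q ≤ r → r ≤ p - 2 → ∃ j : ℕ, j < m ∧ s j = r) ∧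
      (∀ i : ℕ, i ≤ lSeq m s t p → aSeq m s t p i = (q : WithBot ℤ) → (i : ℤ) = p - q)) ∧
    (∀ p : ℤ, 0 ≤ p → p ≤ n → ∀ i : ℕ, i ≤ lSeq m s t p →
      aSeq m s t p i = ((p - (i : ℤ) : ℤ) : WithBot ℤ)) :=
  quadratic_case_general n m s t hquad
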